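/- arXiv:2510.23423 — 5 statements merged into one kernel-verified Lean document; each statement's English description precedes it below -/
import Mathlib

section
/- Let K > 0 and k₀ ≥ 1. Suppose u : ℕ → ℝ satisfies 0 ≤ u(n) ≤ 1 for all n, and for every k ≥ k₀ one has u(2^k) ≤ (1/10)·u(2^{k-1}) + (K/2^k)·√(u(2^k)). Then, setting C₀ := max(4K², (2^{k₀})²), one has u(2^k) ≤ C₀/(2^k)² for every k ≥ 0. -/
/-!
Below scale `2^k₀` the trivial bound `u ≤ 1` already gives `u(2^k) ≤ C₀/4^k`. Above it, in the
recursive inequality either the inherited term `u(2^{k-1})/10` dominates, and by induction it is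
at most `(2/5)·C₀/4^k`, or the square-root term dominates, and then `u ≤ 2(K/2^k)√u` forces
`u ≤ 4K²/4^k ≤ C₀/4^k`.
-/

open Real

theorem le_sq_of_le_mul_sqrt {x b : ℝ} (hx : 0 ≤ x) (h : x ≤ b * √x) : x ≤ b ^ 2 := by
  have hs : √x ^ 2 = x := sq_sqrt hx
  nlinarith [sqrt_nonneg x, sq_nonneg (b - √x)]

theorem le_max_of_le_add_mul_sqrt {x a b : ℝ} (hx : 0 ≤ x) (h : x ≤ a + b * √x) :
    x ≤ max (2 * a) ((2 * b) ^ 2) := by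
  by_cases hab : a ≤ b * √x
  · exact le_max_of_le_right <| le_sq_of_le_mul_sqrt hx <| by linarith
  · exact le_max_of_le_left <| by linarith

theorem le_div_two_pow_succ_sq_of_le_add_mul_sqrt {C K x y : ℝ} {k : ℕ} (hC : 0 ≤ C)
    (hKC : 4 * K ^ 2 ≤ C) (hx : 0 ≤ x) (hy : y ≤ C / ((2 : ℝ) ^ k) ^ 2)
    (h : x ≤ 1 / 10 * y + K / 2 ^ (k + 1) * √x) :
    x ≤ C / ((2 : ℝ) ^ (k + 1)) ^ 2 := by
  have hpow : ((2 : ℝ) ^ (k + 1)) ^ 2 = 4 * ((2 : ℝ) ^ k) ^ 2 := by ring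
  refine (le_max_of_le_add_mul_sqrt hx h).trans (max_le ?_ ?_)
  · calc 2 * (1 / 10 * y) ≤ 2 * (1 / 10 * (C / ((2 : ℝ) ^ k) ^ 2)) := by gcongr
      _ = 4 / 5 * (C / ((2 : ℝ) ^ (k + 1)) ^ 2) := by rw [hpow]; field_simp; ring
      _ ≤ C / ((2 : ℝ) ^ (k + 1)) ^ 2 := by
        have : 0 ≤ C / ((2 : ℝ) ^ (k + 1)) ^ 2 := by positivity
        linarith
  · calc (2 * (K / 2 ^ (k + 1))) ^ 2 = 4 * K ^ 2 / ((2 : ℝ) ^ (k + 1)) ^ 2 := by ring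
      _ ≤ C / ((2 : ℝ) ^ (k + 1)) ^ 2 := by gcongr

theorem dyadic_induction_one_arm_general (K : ℝ) (k₀ : ℕ)
    (u : ℕ → ℝ) (h0 : ∀ n, 0 ≤ u n) (h1 : ∀ n, u n ≤ 1)
    (hrec : ∀ k, k₀ ≤ k →
      u (2 ^ k) ≤ (1 / 10) * u (2 ^ (k - 1)) + (K / 2 ^ k) * Real.sqrt (u (2 ^ k))) :
    ∀ k : ℕ, u (2 ^ k) ≤ max (4 * K ^ 2) (((2 : ℝ) ^ k₀) ^ 2) / ((2 : ℝ) ^ k) ^ 2 := by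
  set C := max (4 * K ^ 2) (((2 : ℝ) ^ k₀) ^ 2)
  have hC : 0 ≤ C := le_max_of_le_right (by positivity)
  have below_k₀ : ∀ k ≤ k₀, u (2 ^ k) ≤ C / ((2 : ℝ) ^ k) ^ 2 := fun k hk => by
    have h2k : ((2 : ℝ) ^ k) ^ 2 ≤ C :=
      le_max_of_le_right <| by gcongr; exact one_le_two
    exact (h1 _).trans <| (one_le_div (by positivity)).mpr h2k
  intro k
  induction k with
  | zero => exact below_k₀ 0 k₀.zero_le
  | succ k ih =>
    by_cases hk : k + 1 ≤ k₀
    · exact below_k₀ _ hk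
    · exact le_div_two_pow_succ_sq_of_le_add_mul_sqrt hC (le_max_left _ _) (h0 _) ih
        (hrec (k + 1) (by omega))

/-- Dyadic renormalisation induction (d > 6 case): if `0 ≤ u ≤ 1` and for every `k ≥ k₀`
one has `u(2^k) ≤ (1/10)·u(2^{k-1}) + (K/2^k)·√(u(2^k))`, then with
`C₀ := max(4K², (2^{k₀})²)` one has `u(2^k) ≤ C₀/(2^k)²` for every `k ≥ 0`. -/
theorem dyadic_induction_one_arm (K : ℝ) (hK : 0 < K) (k₀ : ℕ) (hk₀ : 1 ≤ k₀)
    (u : ℕ → ℝ) (h0 : ∀ n, 0 ≤ u n) (h1 : ∀ n, u n ≤ 1)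
    (hrec : ∀ k, k₀ ≤ k →
      u (2 ^ k) ≤ (1 / 10) * u (2 ^ (k - 1)) + (K / 2 ^ k) * Real.sqrt (u (2 ^ k))) :
    ∀ k : ℕ, u (2 ^ k) ≤ max (4 * K ^ 2) (((2 : ℝ) ^ k₀) ^ 2) / ((2 : ℝ) ^ k) ^ 2 :=
  dyadic_induction_one_arm_general K k₀ u h0 h1 hrec
end

section
/- Let K > 0 and k₀ ≥ 3. Suppose u : ℕ → ℝ satisfies 0 ≤ u(n) ≤ 1 for all n, and for every k ≥ k₀ one has u(2^k) ≤ (1/10)·u(2^{k-1}) + (K·√k/2^k)·√(u(2^k)) + K/(2^k)³. Then, setting C₀ := max(4K², (2^{k₀})²), one has u(2^k) ≤ C₀·k/(2^k)² for every k ≥ 1. -/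
/-!
Multiply the recursion by `4^k`: with `w k = 4^k·u(2^k)` it reads
`w k ≤ (4/10)·w (k-1) + K·√(k·w k) + K/2^k`. By AM–GM the middle term is at most
`K²k + w k / 4 ≤ C₀k/4 + w k / 4`, and `K/2^k ≤ C₀/32` once `k > k₀ ≥ 3`, so
`(3/4)·w k ≤ (2/5)·C₀(k-1) + C₀k/4 + C₀/32 ≤ (3/4)·C₀k`, which closes the induction.
For `k ≤ k₀` the bound is trivial since `u ≤ 1` and `4^k ≤ C₀`.
-/

open Real

lemma le_mul_div_sq_of_le_one {x C n a : ℝ} (hx : x ≤ 1) (ha : 0 < a) (haC : a ^ 2 ≤ C)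
    (hn : 1 ≤ n) : x ≤ C * n / a ^ 2 := by
  rw [le_div_iff₀ (by positivity)]
  nlinarith [sq_nonneg a]

lemma le_mul_div_sq_of_dyadic_step {K C a n x y : ℝ} (hC : 4 * K ^ 2 ≤ C)
    (hKa : 32 * K ≤ C * a) (ha : 0 < a) (hn : 0 ≤ n) (hx : 0 ≤ x)
    (hy : y * (a / 2) ^ 2 ≤ C * (n - 1))
    (hrec : x ≤ 1 / 10 * y + K * √n / a * √x + K / a ^ 3) :
    x ≤ C * n / a ^ 2 := by
  rw [le_div_iff₀ (by positivity)]
  have hmul : x * a ^ 2 ≤ 1 / 10 * (y * a ^ 2) + K * √n * √x * a + K / a := by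
    calc x * a ^ 2 ≤ (1 / 10 * y + K * √n / a * √x + K / a ^ 3) * a ^ 2 :=
          mul_le_mul_of_nonneg_right hrec (sq_nonneg a)
      _ = 1 / 10 * (y * a ^ 2) + K * √n * √x * a + K / a := by
          field_simp
  have hy' : y * a ^ 2 ≤ 4 * (C * (n - 1)) := by
    linarith [show y * (a / 2) ^ 2 = y * a ^ 2 / 4 by ring]
  have amgm : K * √n * √x * a ≤ K ^ 2 * n + x * a ^ 2 / 4 := by
    nlinarith [sq_nonneg (K * √n - √x * a / 2), sq_sqrt hn, sq_sqrt hx]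
  have herr : K / a ≤ C / 32 := by rw [div_le_iff₀ ha]; linarith
  have hKn : K ^ 2 * n ≤ C / 4 * n := mul_le_mul_of_nonneg_right (by linarith) hn
  nlinarith [mul_nonneg (le_trans (by positivity) hC) hn]

theorem dyadic_induction_one_arm_log_general (K : ℝ) (k₀ : ℕ) (hk₀ : 3 ≤ k₀)
    (u : ℕ → ℝ) (h0 : ∀ n, 0 ≤ u n) (h1 : ∀ n, u n ≤ 1)
    (hrec : ∀ k, k₀ ≤ k →
      u (2 ^ k) ≤ (1 / 10) * u (2 ^ (k - 1))
        + (K * Real.sqrt k / 2 ^ k) * Real.sqrt (u (2 ^ k)) + K / ((2 : ℝ) ^ k) ^ 3) :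
    ∀ k : ℕ, 1 ≤ k →
      u (2 ^ k) ≤ max (4 * K ^ 2) (((2 : ℝ) ^ k₀) ^ 2) * k / ((2 : ℝ) ^ k) ^ 2 := by
  set C := max (4 * K ^ 2) (((2 : ℝ) ^ k₀) ^ 2)
  have hCK : 2 * |K| ≤ C := by
    have : (8 : ℝ) ≤ 2 ^ k₀ := le_trans (by norm_num) (pow_le_pow_right₀ one_le_two hk₀)
    nlinarith [sq_nonneg (|K| - 1), sq_abs K, le_max_left (4 * K ^ 2) (((2 : ℝ) ^ k₀) ^ 2),
      le_max_right (4 * K ^ 2) (((2 : ℝ) ^ k₀) ^ 2)]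
  have hsmall : ∀ k : ℕ, 1 ≤ k → k ≤ k₀ → u (2 ^ k) ≤ C * k / ((2 : ℝ) ^ k) ^ 2 :=
    fun k hk hkk ↦ le_mul_div_sq_of_le_one (h1 _) (by positivity)
      ((pow_le_pow_left₀ (by positivity) (pow_le_pow_right₀ one_le_two hkk) 2).trans
        (le_max_right _ _)) (by exact_mod_cast hk)
  intro k hk
  induction k, hk using Nat.le_induction with
  | base => exact hsmall 1 le_rfl (by omega)
  | succ k hk ih =>
    rcases le_or_gt (k + 1) k₀ with hle | hlt
    · exact hsmall (k + 1) (by omega) hle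
    have hrec' := hrec (k + 1) hlt.le
    rw [Nat.add_sub_cancel] at hrec'
    push_cast at hrec' ⊢
    refine le_mul_div_sq_of_dyadic_step (le_max_left _ _) ?_ (by positivity) (by positivity)
      (h0 _) ?_ hrec'
    · have h16 : (16 : ℝ) ≤ 2 ^ (k + 1) :=
        le_trans (by norm_num) (pow_le_pow_right₀ one_le_two (show 4 ≤ k + 1 by omega))
      nlinarith [le_abs_self K, abs_nonneg K]
    · rw [pow_succ (2 : ℝ) k, mul_div_cancel_right₀ _ two_ne_zero, add_sub_cancel_right]
      exact (le_div_iff₀ (by positivity)).mp ih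

/-- Dyadic renormalisation induction with logarithmic correction (d = 6 case): if
`0 ≤ u ≤ 1` and for every `k ≥ k₀ ≥ 3` one has
`u(2^k) ≤ (1/10)·u(2^{k-1}) + (K·√k/2^k)·√(u(2^k)) + K/(2^k)³`, then with
`C₀ := max(4K², (2^{k₀})²)` one has `u(2^k) ≤ C₀·k/(2^k)²` for every `k ≥ 1`. -/
theorem dyadic_induction_one_arm_log (K : ℝ) (hK : 0 < K) (k₀ : ℕ) (hk₀ : 3 ≤ k₀)
    (u : ℕ → ℝ) (h0 : ∀ n, 0 ≤ u n) (h1 : ∀ n, u n ≤ 1)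
    (hrec : ∀ k, k₀ ≤ k →
      u (2 ^ k) ≤ (1 / 10) * u (2 ^ (k - 1))
        + (K * Real.sqrt k / 2 ^ k) * Real.sqrt (u (2 ^ k)) + K / ((2 : ℝ) ^ k) ^ 3) :
    ∀ k : ℕ, 1 ≤ k →
      u (2 ^ k) ≤ max (4 * K ^ 2) (((2 : ℝ) ^ k₀) ^ 2) * k / ((2 : ℝ) ^ k) ^ 2 :=
  dyadic_induction_one_arm_log_general K k₀ hk₀ u h0 h1 hrec
end

section
/- Let α be a nonempty finite type, let p, q : α → ℝ be probability mass functions (nonnegative, summing to 1) with q(x) > 0 for all x, and let A ⊆ α. Then |p(A) - q(A)| ≤ √(2·max(p(A), q(A))·H(p‖q)), where p(A) = ∑_{x∈A} p(x), q(A) = ∑_{x∈A} q(x), and H(p‖q) = ∑_{x∈α} p(x)·log(p(x)/q(x)) (with the convention 0·log 0 = 0). -/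
/-!
Write `H(p‖q) = ∑ₓ q(x)·klFun(p(x)/q(x))` with `klFun u = u log u + 1 - u ≥ 0`; this uses only that
`p` and `q` have the same total mass. Dropping the terms outside `A` and applying Jensen's inequality
to the convex function `klFun` on `A` (the log-sum inequality) gives `H(p‖q) ≥ b·klFun(a/b)` with
`a = p(A)`, `b = q(A)`. The scalar bound `klFun u ≥ (u - 1)² / (2 max(u, 1))` then yields
`H(p‖q) ≥ (a - b)² / (2 max(a, b))`.
-/

open Real Finset InformationTheory

lemma sq_sub_one_div_two_le_klFun {u : ℝ} (hu₀ : 0 ≤ u) (hu₁ : u ≤ 1) :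
    (u - 1) ^ 2 / 2 ≤ klFun u := by
  let g : ℝ → ℝ := fun x ↦ klFun x - (x - 1) ^ 2 / 2
  have hg : AntitoneOn g (Set.Icc 0 1) := by
    refine antitoneOn_of_hasDerivWithinAt_nonpos (f' := fun x ↦ log x - (x - 1))
      (convex_Icc 0 1) (by fun_prop) (fun x hx ↦ ?_) (fun x hx ↦ ?_)
    · rw [interior_Icc] at hx
      have hsq : HasDerivAt (fun y : ℝ ↦ (y - 1) ^ 2 / 2) (x - 1) x :=
        ((((hasDerivAt_id' x).sub_const 1).pow 2).div_const 2).congr_deriv (by ring)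
      exact ((hasDerivAt_klFun hx.1.ne').sub hsq).hasDerivWithinAt
    · rw [interior_Icc] at hx
      linarith [log_le_sub_one_of_pos hx.1]
  have := hg ⟨hu₀, hu₁⟩ ⟨zero_le_one, le_rfl⟩ hu₁
  simp only [g, klFun_one] at this
  linarith

/-- The derivative comparison behind this bound is `log u = log (u²) / 2 ≥ (1 - u⁻²) / 2`. -/
lemma sq_sub_one_div_two_mul_le_klFun {u : ℝ} (hu : 1 ≤ u) :
    (u - 1) ^ 2 / (2 * u) ≤ klFun u := by
  let g : ℝ → ℝ := fun x ↦ klFun x - (x - 1) ^ 2 / (2 * x)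
  have hg : MonotoneOn g (Set.Ici 1) := by
    refine monotoneOn_of_hasDerivWithinAt_nonneg (f' := fun x ↦ log x - (1 - (x ^ 2)⁻¹) / 2)
      (convex_Ici 1) ?_ (fun x hx ↦ ?_) (fun x hx ↦ ?_)
    · exact continuous_klFun.continuousOn.sub <| by
        refine ContinuousOn.div (by fun_prop) (by fun_prop) fun x hx ↦ ?_
        have : (1 : ℝ) ≤ x := hx
        positivity
    · rw [interior_Ici] at hx
      have hx₀ : x ≠ 0 := (zero_lt_one.trans hx).ne'
      have hquot : HasDerivAt (fun y : ℝ ↦ (y - 1) ^ 2 / (2 * y)) ((1 - (x ^ 2)⁻¹) / 2) x := by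
        refine ((((hasDerivAt_id' x).sub_const 1).pow 2).div ((hasDerivAt_id' x).const_mul 2)
          (by simpa using hx₀)).congr_deriv ?_
        simp only [Pi.pow_apply]
        field_simp
        ring
      exact ((hasDerivAt_klFun hx₀).sub hquot).hasDerivWithinAt
    · rw [interior_Ici] at hx
      have hx₀ : 0 < x := zero_lt_one.trans hx
      have := one_sub_inv_le_log_of_pos (pow_pos hx₀ 2)
      rw [log_pow] at this
      push_cast at this
      linarith
  have := hg Set.self_mem_Ici hu hu
  simp only [g, klFun_one] at this
  norm_num at this
  linarith

lemma sq_sub_one_div_two_mul_max_le_klFun {u : ℝ} (hu : 0 ≤ u) :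
    (u - 1) ^ 2 / (2 * max u 1) ≤ klFun u := by
  rcases le_total u 1 with h | h
  · simpa [max_eq_right h] using sq_sub_one_div_two_le_klFun hu h
  · simpa [max_eq_left h] using sq_sub_one_div_two_mul_le_klFun h

lemma sq_sub_div_two_mul_max_le_mul_klFun_div {t s : ℝ} (ht : 0 ≤ t) (hs : 0 < s) :
    (t - s) ^ 2 / (2 * max t s) ≤ s * klFun (t / s) := by
  have ht' : t = s * (t / s) := by field_simp
  have hmax : max t s = s * max (t / s) 1 := by
    rw [mul_max_of_nonneg _ _ hs.le, mul_one, ← ht']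
  calc (t - s) ^ 2 / (2 * max t s) = s * ((t / s - 1) ^ 2 / (2 * max (t / s) 1)) := by
        rw [hmax]
        nth_rw 1 [ht']
        have : 0 < max (t / s) 1 := lt_max_of_lt_right one_pos
        field_simp
    _ ≤ s * klFun (t / s) :=
        mul_le_mul_of_nonneg_left (sq_sub_one_div_two_mul_max_le_klFun (by positivity)) hs.le

/-- The log-sum inequality, i.e. Jensen's inequality for the perspective of `klFun`. -/
lemma sum_mul_klFun_div_sum_le {ι : Type*} (s : Finset ι) (p q : ι → ℝ)
    (hp : ∀ i ∈ s, 0 ≤ p i) (hq : ∀ i ∈ s, 0 < q i) (hs : 0 < ∑ i ∈ s, q i) :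
    (∑ i ∈ s, q i) * klFun ((∑ i ∈ s, p i) / ∑ i ∈ s, q i) ≤
      ∑ i ∈ s, q i * klFun (p i / q i) := by
  have hjensen := convexOn_klFun.map_centerMass_le (fun i hi ↦ (hq i hi).le) hs
    (p := fun i ↦ p i / q i) fun i hi ↦ div_nonneg (hp i hi) (hq i hi).le
  have hmass : s.centerMass q (fun i ↦ p i / q i) = (∑ i ∈ s, p i) / ∑ i ∈ s, q i := by
    rw [centerMass, smul_eq_mul, inv_mul_eq_div]
    congr 1
    exact sum_congr rfl fun i hi ↦ by rw [smul_eq_mul, mul_div_cancel₀ _ (hq i hi).ne']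
  rw [hmass, centerMass, smul_eq_mul, inv_mul_eq_div, le_div_iff₀ hs] at hjensen
  simpa [mul_comm] using hjensen

lemma sum_mul_log_div_eq_sum_mul_klFun {ι : Type*} (s : Finset ι) (p q : ι → ℝ)
    (hq : ∀ i ∈ s, 0 < q i) (hpq : ∑ i ∈ s, p i = ∑ i ∈ s, q i) :
    ∑ i ∈ s, p i * log (p i / q i) = ∑ i ∈ s, q i * klFun (p i / q i) := by
  have hterm : ∀ i ∈ s, q i * klFun (p i / q i) = p i * log (p i / q i) + (q i - p i) := by
    intro i hi
    rw [klFun_apply]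
    field_simp [(hq i hi).ne']
    ring
  rw [sum_congr rfl hterm, sum_add_distrib, sum_sub_distrib, hpq, sub_self, add_zero]

theorem refined_pinsker_general {α : Type*} [Fintype α]
    (p q : α → ℝ) (A : Finset α)
    (hp : ∀ x, 0 ≤ p x) (hq : ∀ x, 0 < q x)
    (hps : ∑ x, p x = 1) (hqs : ∑ x, q x = 1) :
    |∑ x ∈ A, p x - ∑ x ∈ A, q x| ≤
      Real.sqrt (2 * max (∑ x ∈ A, p x) (∑ x ∈ A, q x) *
        ∑ x, p x * Real.log (p x / q x)) := by
  rcases A.eq_empty_or_nonempty with rfl | hA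
  · simp
  have hb : 0 < ∑ x ∈ A, q x := sum_pos (fun x _ ↦ hq x) hA
  have hkey : (∑ x ∈ A, p x - ∑ x ∈ A, q x) ^ 2 / (2 * max (∑ x ∈ A, p x) (∑ x ∈ A, q x)) ≤
      ∑ x, p x * log (p x / q x) :=
    calc _ ≤ (∑ x ∈ A, q x) * klFun ((∑ x ∈ A, p x) / ∑ x ∈ A, q x) :=
          sq_sub_div_two_mul_max_le_mul_klFun_div (sum_nonneg fun x _ ↦ hp x) hb
      _ ≤ ∑ x ∈ A, q x * klFun (p x / q x) :=
          sum_mul_klFun_div_sum_le A p q (fun x _ ↦ hp x) (fun x _ ↦ hq x) hb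
      _ ≤ ∑ x, q x * klFun (p x / q x) := sum_le_univ_sum_of_nonneg fun x ↦
          mul_nonneg (hq x).le (klFun_nonneg (div_nonneg (hp x) (hq x).le))
      _ = ∑ x, p x * log (p x / q x) :=
          (sum_mul_log_div_eq_sum_mul_klFun _ p q (fun x _ ↦ hq x) (hps.trans hqs.symm)).symm
  rw [← sqrt_sq_eq_abs]
  refine sqrt_le_sqrt ?_
  rwa [div_le_iff₀ (by positivity), mul_comm] at hkey

/-- Refined Pinsker inequality (Dewan–Muirhead, Lemma 2.3): for probability mass
functions `p, q` on a nonempty finite type with `q > 0` and a subset `A`,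
`|p(A) - q(A)| ≤ √(2·max(p(A), q(A))·H(p‖q))` where
`H(p‖q) = ∑_x p(x)·log(p(x)/q(x))` (with `0·log 0 = 0`). -/
theorem refined_pinsker {α : Type*} [Fintype α] [Nonempty α]
    (p q : α → ℝ) (A : Finset α)
    (hp : ∀ x, 0 ≤ p x) (hq : ∀ x, 0 < q x)
    (hps : ∑ x, p x = 1) (hqs : ∑ x, q x = 1) :
    |∑ x ∈ A, p x - ∑ x ∈ A, q x| ≤
      Real.sqrt (2 * max (∑ x ∈ A, p x) (∑ x ∈ A, q x) *
        ∑ x, p x * Real.log (p x / q x)) :=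
  refined_pinsker_general p q A hp hq hps hqs
end

section
/- Let d ≥ 7. The double sum ∑_{y,z ∈ ℤ^d} (max(1,‖y‖_∞))^{2-d}·(max(1,‖y-z‖_∞))^{2-d}·(max(1,‖z‖_∞))^{2-d} is finite. -/
/-!
Write `G y = (1 ∨ ‖y‖)^(2-d)`. For `a, b, c ≥ 0` we have
`abc = ((ab)(bc)(ac))^(1/2) ≤ (ab)^(3/2) + (bc)^(3/2) + (ac)^(3/2)`, so the triangle summand is
dominated by three products `G(u)^(3/2) G(v)^(3/2)`, in each of which `(u, v)` is an injective
function of `(y, z)`. It therefore suffices that `G^(3/2) = (1 ∨ ‖y‖)^(-3(d-2)/2)` is summable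
over `ℤ^d`, which holds because `3(d-2)/2 > d` exactly when `d > 6`: since the sup norm dominates
every coordinate, `(1 ∨ ‖y‖)^(-d t) ≤ ∏ i, (1 ∨ |y i|)^(-t)`, a product of one-dimensional
`p`-series with `t > 1`.
-/

open Finset Real

lemma summable_pi_prod {ι α : Type*} [Fintype ι] {g : α → ℝ} (hg0 : ∀ a, 0 ≤ g a)
    (hg : Summable g) : Summable fun x : ι → α => ∏ i, g (x i) := by
  classical
  refine summable_of_sum_le (c := (∑' a, g a) ^ Fintype.card ι)
    (fun x => prod_nonneg fun i _ => hg0 _) fun s => ?_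
  calc ∑ x ∈ s, ∏ i, g (x i)
      ≤ ∑ x ∈ Fintype.piFinset fun i => s.image (· i), ∏ i, g (x i) :=
        sum_le_sum_of_subset_of_nonneg
          (fun x hx => Fintype.mem_piFinset.2 fun i => mem_image_of_mem _ hx)
          fun _ _ _ => prod_nonneg fun i _ => hg0 _
    _ = ∏ i, ∑ a ∈ s.image (· i), g a := (prod_univ_sum _ _).symm
    _ ≤ ∏ _i : ι, ∑' a, g a :=
        prod_le_prod (fun i _ => sum_nonneg fun a _ => hg0 a)
          fun i _ => hg.sum_le_tsum _ fun a _ => hg0 a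
    _ = (∑' a, g a) ^ Fintype.card ι := by rw [prod_const, card_univ]

lemma summable_max_one_norm_int_rpow_neg {s : ℝ} (hs : 1 < s) :
    Summable fun k : ℤ => (max 1 ‖k‖) ^ (-s) := by
  refine (summable_abs_int_rpow hs).congr_cofinite ?_
  filter_upwards [(Set.finite_singleton (0 : ℤ)).compl_mem_cofinite] with k hk
  have hk : (1 : ℝ) ≤ ‖k‖ := by
    rw [Int.norm_eq_abs, ← Int.cast_abs]
    exact_mod_cast Int.one_le_abs hk
  rw [max_eq_right hk, Int.norm_eq_abs]

lemma summable_max_one_norm_rpow_neg_card_mul {ι : Type*} [Fintype ι] {t : ℝ} (ht : 1 < t) :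
    Summable fun y : ι → ℤ => (max 1 ‖y‖) ^ (-(Fintype.card ι * t)) := by
  refine (summable_pi_prod (fun k => by positivity) (summable_max_one_norm_int_rpow_neg ht)
    (ι := ι)).of_nonneg_of_le (fun y => by positivity) fun y => ?_
  calc (max 1 ‖y‖) ^ (-(Fintype.card ι * t)) = ∏ _i : ι, (max 1 ‖y‖) ^ (-t) := by
        rw [prod_const, card_univ, ← rpow_mul_natCast (by positivity)]
        ring_nf
    _ ≤ ∏ i, (max 1 ‖y i‖) ^ (-t) :=
        prod_le_prod (fun i _ => by positivity) fun i _ =>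
          rpow_le_rpow_of_nonpos (by positivity) (max_le_max_left 1 (norm_le_pi_norm y i))
            (by linarith)

lemma summable_max_one_norm_rpow_neg {ι : Type*} [Fintype ι] {s : ℝ}
    (hs : Fintype.card ι < s) : Summable fun y : ι → ℤ => (max 1 ‖y‖) ^ (-s) := by
  rcases isEmpty_or_nonempty ι with hι | hι
  · exact .of_finite
  have hcard : (0 : ℝ) < Fintype.card ι := by exact_mod_cast Fintype.card_pos
  simpa [mul_div_cancel₀ s hcard.ne'] using
    summable_max_one_norm_rpow_neg_card_mul (ι := ι) ((one_lt_div hcard).2 hs)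

lemma mul_mul_le_add_rpow_three_halves {a b c : ℝ} (ha : 0 ≤ a) (hb : 0 ≤ b) (hc : 0 ≤ c) :
    a * b * c ≤ (a * b) ^ (3 / 2 : ℝ) + (b * c) ^ (3 / 2 : ℝ) + (a * c) ^ (3 / 2 : ℝ) := by
  set x := (a * b) ^ (3 / 2 : ℝ)
  set y := (b * c) ^ (3 / 2 : ℝ)
  set z := (a * c) ^ (3 / 2 : ℝ)
  have hx : 0 ≤ x := by positivity
  have hy : 0 ≤ y := by positivity
  have hz : 0 ≤ z := by positivity
  have hcube : (a * b * c) ^ 3 = x * y * z := by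
    rw [← mul_rpow (by positivity) (by positivity), ← mul_rpow (by positivity) (by positivity),
      show a * b * (b * c) * (a * c) = (a * b * c) ^ 2 by ring, ← rpow_natCast_mul (by positivity)]
    norm_num
  refine le_of_pow_le_pow_left₀ three_ne_zero (by positivity) ?_
  calc (a * b * c) ^ 3 = x * y * z := hcube
    _ ≤ (x + y + z) * (x + y + z) * (x + y + z) := by gcongr <;> linarith
    _ = (x + y + z) ^ 3 := by ring

lemma summable_triangle_of_summable_rpow_three_halves {A : Type*} [AddCommGroup A] {f : A → ℝ}
    (hf0 : ∀ x, 0 ≤ f x) (hf : Summable fun x => f x ^ (3 / 2 : ℝ)) :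
    Summable fun p : A × A => f p.1 * f (p.1 - p.2) * f p.2 := by
  have hF0 : ∀ x, 0 ≤ f x ^ (3 / 2 : ℝ) := fun x => rpow_nonneg (hf0 x) _
  have h₁₃ : Summable fun p : A × A => f p.1 ^ (3 / 2 : ℝ) * f p.2 ^ (3 / 2 : ℝ) :=
    hf.mul_of_nonneg hf hF0 hF0
  have h₁₂ : Summable fun p : A × A => f p.1 ^ (3 / 2 : ℝ) * f (p.1 - p.2) ^ (3 / 2 : ℝ) :=
    h₁₃.comp_injective (i := fun p : A × A => (p.1, p.1 - p.2)) fun p q h => by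
      obtain ⟨h₁, h₂⟩ := Prod.mk.inj h
      exact Prod.ext h₁ (by simpa [h₁] using h₂)
  have h₂₃ : Summable fun p : A × A => f (p.1 - p.2) ^ (3 / 2 : ℝ) * f p.2 ^ (3 / 2 : ℝ) :=
    h₁₃.comp_injective (i := fun p : A × A => (p.1 - p.2, p.2)) fun p q h => by
      obtain ⟨h₁, h₂⟩ := Prod.mk.inj h
      exact Prod.ext (by simpa [h₂] using h₁) h₂
  refine ((h₁₂.add h₂₃).add h₁₃).of_nonneg_of_le
    (fun p => mul_nonneg (mul_nonneg (hf0 _) (hf0 _)) (hf0 _)) fun p => ?_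
  have := mul_mul_le_add_rpow_three_halves (hf0 p.1) (hf0 (p.1 - p.2)) (hf0 p.2)
  simpa only [mul_rpow (hf0 _) (hf0 _)] using this

/-- Finiteness of the open triangle diagram for `d ≥ 7`:
`∑_{y,z ∈ ℤ^d} (1 ∨ ‖y‖)^{2-d}·(1 ∨ ‖y-z‖)^{2-d}·(1 ∨ ‖z‖)^{2-d} < ∞`
(the norm on `Fin d → ℤ` is the sup norm). -/
theorem triangle_diagram_summable (d : ℕ) (hd : 7 ≤ d) :
    Summable (fun yz : (Fin d → ℤ) × (Fin d → ℤ) =>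
      (max 1 ‖yz.1‖) ^ ((2 : ℝ) - d) * (max 1 ‖yz.1 - yz.2‖) ^ ((2 : ℝ) - d) *
        (max 1 ‖yz.2‖) ^ ((2 : ℝ) - d)) := by
  have hd' : (7 : ℝ) ≤ d := by exact_mod_cast hd
  refine summable_triangle_of_summable_rpow_three_halves
    (f := fun y : Fin d → ℤ => (max 1 ‖y‖) ^ ((2 : ℝ) - d)) (fun y => by positivity) ?_
  have hs : (Fintype.card (Fin d) : ℝ) < 3 / 2 * (d - 2) := by
    rw [Fintype.card_fin]; linarith
  refine (summable_max_one_norm_rpow_neg hs).congr fun y => ?_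
  rw [← rpow_mul (by positivity)]
  ring_nf
end

section
/- Let d = 6. There exists C > 0 such that for every m ≥ 2, ∑_{x,y ∈ Λ_m ⊂ ℤ^6} (max(1,‖x‖_∞))^{-4}·(max(1,‖x-y‖_∞))^{-4}·(max(1,‖y‖_∞))^{-4} ≤ C·log m. -/
/-- The box `Λ_m = {x ∈ ℤ^6 : ‖x‖_∞ ≤ m}`. -/
noncomputable def latticeBox (d m : ℕ) : Finset (Fin d → ℤ) :=
  Finset.Icc (fun _ => -(m : ℤ)) (fun _ => (m : ℤ))

/-!
Write `N` for the sup norm on `ℤ^6` and `g k = (1 ∨ k)^{-4}`. In the summand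
`g(N x) g(N (x - y)) g(N y)` the factor of the largest of the three norms is at most that of the
middle one, so the summand is bounded by `g(a) g(b)^2` for the two smaller norms `a ≤ b`, and the
corresponding pair among `x, y, x - y` ranges injectively over `Λ_{2m}²`. Since the shell
`{N u = k}` has `O(k^5)` points, `∑_{N u ≤ r} g(N u) = O(r^2)`; summing over the smaller vector
first therefore leaves `∑_{v ∈ Λ_{2m}} (1 ∨ N v)^{-6} = O(∑_{k ≤ 2m} k^5 k^{-6}) = O(log m)`.
-/

open Finset

theorem Finset.sum_sum_comp_le_of_injective {α : Type*} [DecidableEq α] {s t : Finset α}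
    (hst : s ⊆ t)
    {φ : α → α → α} (hφ : ∀ x, Function.Injective (φ x)) (hmaps : ∀ x ∈ s, ∀ y ∈ s, φ x y ∈ t)
    {F : α → α → ℝ} (hF : ∀ x ∈ t, ∀ y ∈ t, 0 ≤ F x y) :
    ∑ x ∈ s, ∑ y ∈ s, F x (φ x y) ≤ ∑ x ∈ t, ∑ y ∈ t, F x y := by
  calc ∑ x ∈ s, ∑ y ∈ s, F x (φ x y)
      = ∑ x ∈ s, ∑ y ∈ s.image (φ x), F x y :=
        sum_congr rfl fun x _ => (sum_image fun _ _ _ _ h => hφ x h).symm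
    _ ≤ ∑ x ∈ s, ∑ y ∈ t, F x y := sum_le_sum fun x hx =>
        sum_le_sum_of_subset_of_nonneg (image_subset_iff.mpr (hmaps x hx))
          fun y hy _ => hF x (hst hx) y hy
    _ ≤ ∑ x ∈ t, ∑ y ∈ t, F x y :=
        sum_le_sum_of_subset_of_nonneg hst fun x hx _ => sum_nonneg fun y hy => hF x hx y hy

def pairWeight (g : ℕ → ℝ) (a b : ℕ) : ℝ := if a ≤ b then g a * g b ^ 2 else 0

section pairWeight

variable {g : ℕ → ℝ}

theorem pairWeight_nonneg (hg0 : 0 ≤ g) (a b : ℕ) : 0 ≤ pairWeight g a b := by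
  unfold pairWeight
  split_ifs
  · exact mul_nonneg (hg0 a) (sq_nonneg _)
  · exact le_rfl

theorem mul_mul_le_pairWeight_add (hg : Antitone g) (hg0 : 0 ≤ g) {a b c : ℕ}
    (h : max a b ≤ c) : g a * g b * g c ≤ pairWeight g a b + pairWeight g b a := by
  rcases le_total a b with hab | hba
  · have : g a * g b * g c ≤ pairWeight g a b := by
      rw [pairWeight, if_pos hab, sq, ← mul_assoc]
      exact mul_le_mul_of_nonneg_left (hg (le_of_max_le_right h)) (mul_nonneg (hg0 a) (hg0 b))
    linarith [pairWeight_nonneg hg0 b a]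
  · have : g a * g b * g c ≤ pairWeight g b a := by
      rw [pairWeight, if_pos hba, sq, ← mul_assoc, mul_comm (g a)]
      exact mul_le_mul_of_nonneg_left (hg (le_of_max_le_left h)) (mul_nonneg (hg0 b) (hg0 a))
    linarith [pairWeight_nonneg hg0 a b]

theorem mul_mul_le_sum_pairWeight (hg : Antitone g) (hg0 : 0 ≤ g) (a b c : ℕ) :
    g a * g b * g c ≤ (pairWeight g a b + pairWeight g b a) + (pairWeight g a c + pairWeight g c a)
      + (pairWeight g b c + pairWeight g c b) := by
  have hP := pairWeight_nonneg hg0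
  rcases le_or_gt (max a b) c with hc | hc
  · linarith [mul_mul_le_pairWeight_add hg hg0 hc, hP a c, hP c a, hP b c, hP c b]
  rcases le_or_gt (max a c) b with hb | hb
  · have := mul_mul_le_pairWeight_add hg hg0 hb
    linarith [mul_right_comm (g a) (g b) (g c), hP a b, hP b a, hP b c, hP c b]
  · have := mul_mul_le_pairWeight_add hg hg0 (a := b) (b := c) (c := a) (by omega)
    linarith [mul_comm (g a) (g b * g c), mul_assoc (g b) (g c) (g a),
      hP a b, hP b a, hP a c, hP c a]

theorem sum_sum_pairWeight_add_swap {α : Type*} (s : Finset α) (N : α → ℕ) :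
    ∑ u ∈ s, ∑ v ∈ s, (pairWeight g (N u) (N v) + pairWeight g (N v) (N u)) =
      2 * ∑ v ∈ s, g (N v) ^ 2 * ∑ u ∈ s with N u ≤ N v, g (N u) := by
  have h : ∑ u ∈ s, ∑ v ∈ s, pairWeight g (N u) (N v) =
      ∑ v ∈ s, g (N v) ^ 2 * ∑ u ∈ s with N u ≤ N v, g (N u) := by
    rw [sum_comm]
    refine sum_congr rfl fun v _ => ?_
    rw [sum_filter, mul_sum]
    refine sum_congr rfl fun u _ => ?_
    unfold pairWeight
    split_ifs <;> ring
  simp only [sum_add_distrib]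
  rw [sum_comm (f := fun u v => pairWeight g (N v) (N u)), h]
  ring

end pairWeight

namespace LatticeBox

variable {d : ℕ}

def supNorm (u : Fin d → ℤ) : ℕ := univ.sup fun i => (u i).natAbs

theorem le_supNorm (u : Fin d → ℤ) (i : Fin d) : (u i).natAbs ≤ supNorm u :=
  le_sup (f := fun i => (u i).natAbs) (mem_univ i)

theorem norm_eq_supNorm (u : Fin d → ℤ) : ‖u‖ = supNorm u := by
  rw [Pi.norm_def, supNorm, ← NNReal.coe_natCast, Nat.cast_finsetSup]
  simp only [NNReal.natCast_natAbs]

theorem mem_latticeBox_iff {m : ℕ} {u : Fin d → ℤ} : u ∈ latticeBox d m ↔ supNorm u ≤ m := by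
  simp only [latticeBox, mem_Icc, Pi.le_def, supNorm, Finset.sup_le_iff, mem_univ, true_implies,
    ← forall_and]
  exact forall_congr' fun i => by omega

theorem supNorm_sub_le (x y : Fin d → ℤ) : supNorm (x - y) ≤ supNorm x + supNorm y :=
  Finset.sup_le fun i _ =>
    (Int.natAbs_sub_le _ _).trans (add_le_add (le_supNorm x i) (le_supNorm y i))

theorem latticeBox_mono : Monotone (latticeBox d) := fun _ _ h _ hu =>
  mem_latticeBox_iff.mpr ((mem_latticeBox_iff.mp hu).trans h)

theorem latticeBox_zero : latticeBox d 0 = {0} := by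
  ext u
  simp [mem_latticeBox_iff, supNorm, funext_iff]

theorem filter_supNorm_le_subset (s : Finset (Fin d → ℤ)) (r : ℕ) :
    {u ∈ s | supNorm u ≤ r} ⊆ latticeBox d r :=
  fun _ hu => mem_latticeBox_iff.mpr (mem_filter.mp hu).2

theorem card_latticeBox (m : ℕ) : #(latticeBox d m) = (2 * m + 1) ^ d := by
  simp only [latticeBox, Pi.card_Icc, Int.card_Icc, prod_const, card_univ, Fintype.card_fin]
  congr 1
  omega

theorem card_latticeBox_succ_sdiff_le (k : ℕ) :
    #(latticeBox d (k + 1) \ latticeBox d k) ≤ 2 * d * 3 ^ (d - 1) * (k + 1) ^ (d - 1) := by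
  have hpow : (2 * k + 3) ^ d - (2 * k + 1) ^ d ≤ 2 * d * (2 * k + 3) ^ (d - 1) := by
    grind [abs_pow_sub_pow_le (α := ℤ) (2 * k + 3) (2 * k + 1) d]
  rw [card_sdiff_of_subset (latticeBox_mono (by omega)), card_latticeBox, card_latticeBox,
    mul_assoc _ (3 ^ _), ← mul_pow]
  exact hpow.trans (Nat.mul_le_mul_left _ (Nat.pow_le_pow_left (by omega) _))

theorem sum_latticeBox_comp_supNorm (f : ℕ → ℝ) (n : ℕ) :
    ∑ u ∈ latticeBox d n, f (supNorm u) =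
      f 0 + ∑ k ∈ range n, #(latticeBox d (k + 1) \ latticeBox d k) * f (k + 1) := by
  rw [sum_eq_sum_range_sdiff _ latticeBox_mono, latticeBox_zero, sum_singleton]
  congr 1
  · exact congrArg f (sup_bot _)
  refine sum_congr rfl fun k _ => ?_
  rw [← nsmul_eq_mul, ← sum_const]
  refine sum_congr rfl fun u hu => ?_
  rw [mem_sdiff, mem_latticeBox_iff, mem_latticeBox_iff] at hu
  rw [show supNorm u = k + 1 by omega]

theorem sum_latticeBox_comp_supNorm_le {f : ℕ → ℝ} (hf : 0 ≤ f) (n : ℕ) :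
    ∑ u ∈ latticeBox d n, f (supNorm u) ≤
      f 0 + 2 * d * 3 ^ (d - 1) * ∑ k ∈ range n, ((k : ℝ) + 1) ^ (d - 1) * f (k + 1) := by
  rw [sum_latticeBox_comp_supNorm, mul_sum]
  refine add_le_add le_rfl (sum_le_sum fun k _ => ?_)
  calc (#(latticeBox d (k + 1) \ latticeBox d k) : ℝ) * f (k + 1)
      ≤ ((2 * d * 3 ^ (d - 1) * (k + 1) ^ (d - 1) : ℕ) : ℝ) * f (k + 1) := by
        gcongr
        · exact hf _
        · exact card_latticeBox_succ_sdiff_le k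
    _ = _ := by push_cast; ring

theorem sum_triangle_le {g : ℕ → ℝ} (hg : Antitone g) (hg0 : 0 ≤ g) (m : ℕ) :
    ∑ x ∈ latticeBox d m, ∑ y ∈ latticeBox d m,
        g (supNorm x) * g (supNorm (x - y)) * g (supNorm y) ≤
      6 * ∑ v ∈ latticeBox d (2 * m),
        g (supNorm v) ^ 2 *
          ∑ u ∈ latticeBox d (2 * m) with supNorm u ≤ supNorm v, g (supNorm u) := by
  set F : (Fin d → ℤ) → (Fin d → ℤ) → ℝ := fun u v =>
    pairWeight g (supNorm u) (supNorm v) + pairWeight g (supNorm v) (supNorm u)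
  have hF : ∀ u ∈ latticeBox d (2 * m), ∀ v ∈ latticeBox d (2 * m), 0 ≤ F u v := fun u _ v _ =>
    add_nonneg (pairWeight_nonneg hg0 _ _) (pairWeight_nonneg hg0 _ _)
  have hsub : latticeBox d m ⊆ latticeBox d (2 * m) := latticeBox_mono (by omega)
  have hsub_mem : ∀ x ∈ latticeBox d m, ∀ y ∈ latticeBox d m, x - y ∈ latticeBox d (2 * m) :=
    fun x hx y hy => mem_latticeBox_iff.mpr <| (supNorm_sub_le x y).trans <| by
      have := mem_latticeBox_iff.mp hx; have := mem_latticeBox_iff.mp hy; omega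
  have hpoint : ∀ x y, g (supNorm x) * g (supNorm (x - y)) * g (supNorm y) ≤
      F x y + F x (x - y) + F y (x - y) := fun x y => by
    rw [mul_right_comm]
    exact mul_mul_le_sum_pairWeight hg hg0 _ _ _
  have hpair_xy := sum_sum_comp_le_of_injective hsub (φ := fun _ y => y)
    (fun _ => Function.injective_id) (fun _ _ y hy => hsub hy) hF
  have hpair_x_sub := sum_sum_comp_le_of_injective hsub (φ := fun x y => x - y)
    (fun _ => sub_right_injective) hsub_mem hF
  have hpair_y_sub : ∑ x ∈ latticeBox d m, ∑ y ∈ latticeBox d m, F y (x - y) ≤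
      ∑ u ∈ latticeBox d (2 * m), ∑ v ∈ latticeBox d (2 * m), F u v := by
    rw [sum_comm]
    exact sum_sum_comp_le_of_injective hsub (φ := fun y x => x - y) (fun _ => sub_left_injective)
      (fun y hy x hx => hsub_mem x hx y hy) hF
  have hsymm := sum_sum_pairWeight_add_swap (g := g) (latticeBox d (2 * m)) supNorm
  calc _ ≤ ∑ x ∈ latticeBox d m, ∑ y ∈ latticeBox d m, (F x y + F x (x - y) + F y (x - y)) :=
        sum_le_sum fun x _ => sum_le_sum fun y _ => hpoint x y
    _ ≤ _ := by
        simp only [sum_add_distrib]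
        linarith

noncomputable def decay (e k : ℕ) : ℝ := (max 1 (k : ℝ) ^ e)⁻¹

theorem decay_zero (e : ℕ) : decay e 0 = 1 := by simp [decay]

theorem decay_succ (e k : ℕ) : decay e (k + 1) = (((k : ℝ) + 1) ^ e)⁻¹ := by
  rw [decay, Nat.cast_succ, max_eq_right (by linarith [k.cast_nonneg (α := ℝ)])]

theorem decay_nonneg (e : ℕ) : 0 ≤ decay e := fun _ => by unfold decay; positivity

theorem decay_antitone (e : ℕ) : Antitone (decay e) := fun _ _ h => by
  unfold decay
  gcongr

theorem rpow_neg_max_one_norm (e : ℕ) (u : Fin d → ℤ) :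
    max 1 ‖u‖ ^ (-(e : ℝ)) = decay e (supNorm u) := by
  rw [norm_eq_supNorm, Real.rpow_neg (by positivity), Real.rpow_natCast, decay]

theorem sum_decay_sub_two_latticeBox_le_sq (hd : 2 ≤ d) (n : ℕ) :
    ∑ u ∈ latticeBox d n, decay (d - 2) (supNorm u) ≤ 1 + 2 * d * 3 ^ (d - 1) * (n : ℝ) ^ 2 := by
  refine (sum_latticeBox_comp_supNorm_le (decay_nonneg _) n).trans ?_
  rw [decay_zero]
  gcongr
  calc ∑ k ∈ range n, ((k : ℝ) + 1) ^ (d - 1) * decay (d - 2) (k + 1)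
      = ∑ k ∈ range n, ((k : ℝ) + 1) := sum_congr rfl fun k _ => by
        rw [decay_succ, show d - 1 = d - 2 + 1 by omega, pow_succ]
        field_simp
    _ ≤ #(range n) • (n : ℝ) := sum_le_card_nsmul _ _ _ fun k hk => by
        exact_mod_cast mem_range.mp hk
    _ = (n : ℝ) ^ 2 := by rw [card_range, nsmul_eq_mul, sq]

theorem sum_decay_latticeBox_le_log (hd : 1 ≤ d) (n : ℕ) :
    ∑ u ∈ latticeBox d n, decay d (supNorm u) ≤ 1 + 2 * d * 3 ^ (d - 1) * (1 + Real.log n) := by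
  refine (sum_latticeBox_comp_supNorm_le (decay_nonneg _) n).trans ?_
  rw [decay_zero]
  gcongr
  calc ∑ k ∈ range n, ((k : ℝ) + 1) ^ (d - 1) * decay d (k + 1)
      = harmonic n := by
        rw [harmonic]
        push_cast
        refine sum_congr rfl fun k _ => ?_
        rw [decay_succ, ← pow_sub_one_mul (by omega : d ≠ 0)]
        field_simp
    _ ≤ 1 + Real.log n := harmonic_le_one_add_log n

theorem sq_decay_succ_mul_le (e : ℕ) {c : ℝ} (hc : 0 ≤ c) (k : ℕ) :
    decay (e + 1) k ^ 2 * (1 + c * (k : ℝ) ^ 2) ≤ (1 + c) * decay (2 * e) k := by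
  set t := max 1 (k : ℝ)
  have ht : 1 ≤ t := le_max_left _ _
  have hkt : (k : ℝ) ^ 2 ≤ t ^ 2 := pow_le_pow_left₀ k.cast_nonneg (le_max_right _ _) 2
  have hpow : t ^ (2 * e) * t ^ 2 = (t ^ (e + 1)) ^ 2 := by ring
  rw [decay, decay, inv_pow, ← hpow, mul_comm, ← div_eq_mul_inv, div_le_iff₀ (by positivity)]
  calc 1 + c * (k : ℝ) ^ 2 ≤ (1 + c) * t ^ 2 := by nlinarith [one_le_pow₀ ht (n := 2)]
    _ = (1 + c) * (t ^ (2 * e))⁻¹ * (t ^ (2 * e) * t ^ 2) := by field_simp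

-- `2916 = 2 * 6 * 3 ^ 5` is the shell constant of `card_latticeBox_succ_sdiff_le` for `d = 6`.
theorem sum_sq_decay_mul_sum_decay_le_log (M : ℕ) :
    ∑ v ∈ latticeBox 6 M, decay 4 (supNorm v) ^ 2 *
        ∑ u ∈ latticeBox 6 M with supNorm u ≤ supNorm v, decay 4 (supNorm u) ≤
      2917 * (1 + 2916 * (1 + Real.log M)) := by
  have hinner : ∀ v : Fin 6 → ℤ, ∑ u ∈ latticeBox 6 M with supNorm u ≤ supNorm v,
      decay 4 (supNorm u) ≤ 1 + 2916 * (supNorm v : ℝ) ^ 2 := fun v => by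
    have hsum := sum_decay_sub_two_latticeBox_le_sq (d := 6) (by norm_num) (supNorm v)
    norm_num at hsum
    calc _ ≤ ∑ u ∈ latticeBox 6 (supNorm v), decay 4 (supNorm u) :=
          sum_le_sum_of_subset_of_nonneg (filter_supNorm_le_subset _ _)
            fun u _ _ => decay_nonneg 4 _
      _ ≤ _ := hsum
  calc _ ≤ ∑ v ∈ latticeBox 6 M, decay 4 (supNorm v) ^ 2 * (1 + 2916 * (supNorm v : ℝ) ^ 2) :=
        sum_le_sum fun v _ => mul_le_mul_of_nonneg_left (hinner v) (sq_nonneg _)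
    _ ≤ ∑ v ∈ latticeBox 6 M, 2917 * decay 6 (supNorm v) := sum_le_sum fun v _ => by
        have := sq_decay_succ_mul_le 3 (c := 2916) (by norm_num) (supNorm v)
        norm_num at this
        exact this
    _ ≤ 2917 * (1 + 2916 * (1 + Real.log M)) := by
        rw [← mul_sum]
        have := sum_decay_latticeBox_le_log (d := 6) (by norm_num) M
        norm_num at this
        gcongr

end LatticeBox

open LatticeBox in
/-- Logarithmic divergence of the restricted triangle diagram at `d = 6`: there exists
`C > 0` such that for every `m ≥ 2`,
`∑_{x,y ∈ Λ_m} (1 ∨ ‖x‖)^{-4}·(1 ∨ ‖x-y‖)^{-4}·(1 ∨ ‖y‖)^{-4} ≤ C·log m`. -/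
theorem triangle_diagram_log_d6 :
    ∃ C > (0 : ℝ), ∀ m : ℕ, 2 ≤ m →
      ∑ x ∈ latticeBox 6 m, ∑ y ∈ latticeBox 6 m,
        (max 1 ‖x‖) ^ (-(4 : ℝ)) * (max 1 ‖x - y‖) ^ (-(4 : ℝ)) *
          (max 1 ‖y‖) ^ (-(4 : ℝ)) ≤ C * Real.log m := by
  refine ⟨10 ^ 9, by norm_num, fun m hm => ?_⟩
  have hdecay (u : Fin 6 → ℤ) : max 1 ‖u‖ ^ (-(4 : ℝ)) = decay 4 (supNorm u) := by
    exact_mod_cast rpow_neg_max_one_norm 4 u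
  have hlog2 : Real.log 2 ≤ Real.log m := Real.log_le_log (by norm_num) (by exact_mod_cast hm)
  have hlog_double : Real.log (2 * m : ℕ) = Real.log 2 + Real.log m := by
    push_cast
    exact Real.log_mul (by norm_num) (by positivity)
  simp only [hdecay]
  calc _ ≤ 6 * (2917 * (1 + 2916 * (1 + Real.log (2 * m : ℕ)))) :=
        (sum_triangle_le (decay_antitone 4) (decay_nonneg 4) m).trans
          (by gcongr; exact sum_sq_decay_mul_sum_decay_le_log _)
    _ ≤ 10 ^ 9 * Real.log m := by
        rw [hlog_double]
        linarith [Real.log_two_gt_d9, Real.log_two_lt_d9]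
end
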